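/- For every p ∈ (1,∞), one has ∫₀^{π_{2,p}/2} x / sin_{2,p}(x) dx = ∫₀¹ K_{2,p}(k) dk, where K_{2,p}(k) := ∫₀^{π_{2,p}/2} (1 − k^p·(sin_{2,p}θ)^p)^{−1/2} dθ for k ∈ [0,1). -/

import Mathlib

open Real Set MeasureTheory Filter

/-- `sin_{p,q}^{-1}(x) = ∫₀ˣ (1-t^q)^{-1/p} dt`. -/
noncomputable def arcsinpq (p q x : ℝ) : ℝ := ∫ t in (0:ℝ)..x, (1 - t ^ q) ^ (-(1 / p))

/-- The generalized π: `π_{p,q} = 2 sin_{p,q}^{-1}(1)`. -/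
noncomputable def pipq (p q : ℝ) : ℝ := 2 * arcsinpq p q 1

/-- `sin_{p,q}` on `[0, π_{p,q}/2]`, as the inverse of `arcsinpq p q : [0,1] → [0, π_{p,q}/2]`. -/
noncomputable def sinHalf (p q : ℝ) : ℝ → ℝ := Function.invFunOn (arcsinpq p q) (Set.Icc 0 1)

/-- `sin_{p,q}` on all of `ℝ`: extended to `[π_{p,q}/2, π_{p,q}]` by `sin_{p,q}(π_{p,q}-x)` and
then to `ℝ` as the odd `2π_{p,q}`-periodic continuation. -/
noncomputable def sinpq (p q x : ℝ) : ℝ :=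
  let T := pipq p q
  let y := x - 2 * T * (⌊(x + T) / (2 * T)⌋ : ℝ)
  if y < 0 then -(sinHalf p q (if -y ≤ T / 2 then -y else T + y))
  else sinHalf p q (if y ≤ T / 2 then y else T - y)

/-- `cos_{p,q} = (sin_{p,q})'`. -/
noncomputable def cospq (p q : ℝ) : ℝ → ℝ := deriv (sinpq p q)

/-- Rising factorial (Pochhammer symbol) `(a)_n = a(a+1)⋯(a+n-1)`. -/
noncomputable def poch (a : ℝ) (n : ℕ) : ℝ := ∏ i ∈ Finset.range n, (a + i)

/-! Substituting `u = k s` gives `∫₀¹ (1 - k^q s^q)^(-1/p) dk = sin_{p,q}⁻¹(s) / s`, which is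
`θ / sin_{p,q} θ` at `s = sin_{p,q} θ`; so the identity is Fubini's theorem, applicable because the
integrand is dominated by `(1 - k^q)^(-1/p)`, which is integrable in `k` since `1 - k^q ≥ 1 - k`
and `1/p < 1`. -/

section

variable {p q : ℝ}

lemma intervalIntegrable_one_sub_rpow_rpow_zero_one (hp : 1 < p) (hq : 1 ≤ q) :
    IntervalIntegrable (fun t : ℝ => (1 - t ^ q) ^ (-(1 / p))) volume 0 1 := by
  have hsing : IntervalIntegrable (fun t : ℝ => (1 - t) ^ (-(1 / p))) volume 0 1 := by
    have hr : -1 < -(1 / p) := by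
      have : 1 / p < 1 := (div_lt_one (by linarith)).2 hp
      linarith
    simpa using
      ((intervalIntegral.intervalIntegrable_rpow' (a := 0) (b := 1) hr).comp_sub_left 1).symm
  refine hsing.mono_fun (by fun_prop : Measurable _).aestronglyMeasurable ?_
  filter_upwards [ae_restrict_mem measurableSet_uIoc] with t ht
  rw [uIoc_of_le zero_le_one] at ht
  have htq : t ^ q ≤ t := by
    simpa using rpow_le_rpow_of_exponent_ge ht.1 ht.2 hq
  have htq1 : t ^ q ≤ 1 := htq.trans ht.2
  rw [norm_of_nonneg (rpow_nonneg (by linarith) _),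
    norm_of_nonneg (rpow_nonneg (by linarith [ht.2]) _)]
  rcases ht.2.lt_or_eq with ht1 | rfl
  · exact rpow_le_rpow_of_nonpos (by linarith) (by linarith) (neg_nonpos.2 (by positivity))
  · simp

lemma intervalIntegrable_one_sub_rpow_rpow (hp : 1 < p) (hq : 1 ≤ q) {a b : ℝ}
    (ha : a ∈ Icc (0 : ℝ) 1) (hb : b ∈ Icc (0 : ℝ) 1) :
    IntervalIntegrable (fun t : ℝ => (1 - t ^ q) ^ (-(1 / p))) volume a b :=
  (intervalIntegrable_one_sub_rpow_rpow_zero_one hp hq).mono_set <| by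
    rw [uIcc_of_le zero_le_one]
    exact uIcc_subset_Icc ha hb

lemma arcsinpq_zero : arcsinpq p q 0 = 0 :=
  intervalIntegral.integral_same

lemma arcsinpq_strictMonoOn (hp : 1 < p) (hq : 1 ≤ q) : StrictMonoOn (arcsinpq p q) (Icc 0 1) := by
  intro x hx y hy hxy
  have hpos : 0 < ∫ t in x..y, (1 - t ^ q) ^ (-(1 / p)) :=
    intervalIntegral.intervalIntegral_pos_of_pos_on
      (intervalIntegrable_one_sub_rpow_rpow hp hq hx hy)
      (fun t ht => rpow_pos_of_pos (sub_pos.2 <|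
        rpow_lt_one (hx.1.trans ht.1.le) (ht.2.trans_le hy.2) (by linarith)) _) hxy
  have hsplit := intervalIntegral.integral_add_adjacent_intervals
    (intervalIntegrable_one_sub_rpow_rpow hp hq (left_mem_Icc.2 zero_le_one) hx)
    (intervalIntegrable_one_sub_rpow_rpow hp hq hx hy)
  simp only [arcsinpq]
  linarith

lemma arcsinpq_continuousOn (hp : 1 < p) (hq : 1 ≤ q) : ContinuousOn (arcsinpq p q) (Icc 0 1) := by
  have := intervalIntegral.continuousOn_primitive_interval (a := 0) (b := 1) (μ := volume)
    (f := fun t : ℝ => (1 - t ^ q) ^ (-(1 / p))) <|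
    (intervalIntegrable_iff').1 (intervalIntegrable_one_sub_rpow_rpow_zero_one hp hq)
  rw [uIcc_of_le zero_le_one] at this
  exact this

lemma pipq_pos (hp : 1 < p) (hq : 1 ≤ q) : 0 < pipq p q := by
  have := arcsinpq_strictMonoOn hp hq (left_mem_Icc.2 zero_le_one) (right_mem_Icc.2 zero_le_one)
    zero_lt_one
  rw [arcsinpq_zero] at this
  simp only [pipq]
  linarith

lemma arcsinpq_surjOn (hp : 1 < p) (hq : 1 ≤ q) :
    SurjOn (arcsinpq p q) (Icc 0 1) (Icc 0 (pipq p q / 2)) := by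
  simpa [arcsinpq_zero, pipq] using (arcsinpq_continuousOn hp hq).surjOn_Icc
    (left_mem_Icc.2 zero_le_one) (right_mem_Icc.2 zero_le_one)

lemma sinpq_eq_sinHalf (hp : 1 < p) (hq : 1 ≤ q) {x : ℝ} (hx : x ∈ Icc 0 (pipq p q / 2)) :
    sinpq p q x = sinHalf p q x := by
  have hT := pipq_pos hp hq
  have hfloor : ⌊(x + pipq p q) / (2 * pipq p q)⌋ = 0 := by
    rw [Int.floor_eq_zero_iff]
    constructor
    · exact div_nonneg (by linarith [hx.1]) (by linarith)
    · rw [div_lt_one (by linarith)]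
      linarith [hx.2]
  simp only [sinpq, hfloor, Int.cast_zero, mul_zero, sub_zero, if_neg (not_lt.2 hx.1), if_pos hx.2]

lemma sinpq_mem_Icc (hp : 1 < p) (hq : 1 ≤ q) {x : ℝ} (hx : x ∈ Icc 0 (pipq p q / 2)) :
    sinpq p q x ∈ Icc 0 1 := by
  rw [sinpq_eq_sinHalf hp hq hx]
  exact (arcsinpq_surjOn hp hq).mapsTo_invFunOn hx

lemma arcsinpq_sinpq (hp : 1 < p) (hq : 1 ≤ q) {x : ℝ} (hx : x ∈ Icc 0 (pipq p q / 2)) :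
    arcsinpq p q (sinpq p q x) = x := by
  rw [sinpq_eq_sinHalf hp hq hx]
  exact (arcsinpq_surjOn hp hq).rightInvOn_invFunOn hx

lemma sinpq_pos (hp : 1 < p) (hq : 1 ≤ q) {x : ℝ} (hx : x ∈ Ioc 0 (pipq p q / 2)) :
    0 < sinpq p q x := by
  have hx' := Ioc_subset_Icc_self hx
  refine (sinpq_mem_Icc hp hq hx').1.lt_of_ne fun h => hx.1.ne ?_
  rw [← arcsinpq_sinpq hp hq hx', ← h, arcsinpq_zero]

lemma sinpq_monotoneOn (hp : 1 < p) (hq : 1 ≤ q) :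
    MonotoneOn (sinpq p q) (Icc 0 (pipq p q / 2)) := by
  intro a ha b hb hab
  rwa [← (arcsinpq_strictMonoOn hp hq).le_iff_le (sinpq_mem_Icc hp hq ha) (sinpq_mem_Icc hp hq hb),
    arcsinpq_sinpq hp hq ha, arcsinpq_sinpq hp hq hb]

lemma integral_one_sub_mul_rpow_rpow (p q : ℝ) {s : ℝ} (hs : 0 < s) :
    ∫ k in (0 : ℝ)..1, (1 - k ^ q * s ^ q) ^ (-(1 / p)) = arcsinpq p q s / s := by
  have hscale : EqOn (fun k : ℝ => (1 - k ^ q * s ^ q) ^ (-(1 / p)))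
      (fun k => (1 - (k * s) ^ q) ^ (-(1 / p))) (uIcc 0 1) := fun k hk => by
    rw [uIcc_of_le zero_le_one] at hk
    simp only [mul_rpow hk.1 hs.le]
  rw [intervalIntegral.integral_congr hscale,
    intervalIntegral.integral_comp_mul_right (fun u => (1 - u ^ q) ^ (-(1 / p))) hs.ne',
    zero_mul, one_mul, smul_eq_mul, arcsinpq, inv_mul_eq_div]

lemma norm_one_sub_mul_rpow_rpow_le (hp : 0 < p) (hq : 0 < q) {k s : ℝ} (hk : k ∈ Ioo 0 1)
    (hs : s ∈ Icc 0 1) :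
    ‖(1 - k ^ q * s ^ q) ^ (-(1 / p))‖ ≤ (1 - k ^ q) ^ (-(1 / p)) := by
  have hkq : k ^ q < 1 := rpow_lt_one hk.1.le hk.2 hq
  have hksq : k ^ q * s ^ q ≤ k ^ q :=
    mul_le_of_le_one_right (rpow_nonneg hk.1.le _) (rpow_le_one hs.1 hs.2 hq.le)
  rw [norm_of_nonneg (rpow_nonneg (by linarith) _)]
  exact rpow_le_rpow_of_nonpos (by linarith) (by linarith) (neg_nonpos.2 (by positivity))

lemma integrable_one_sub_mul_sinpq_rpow_rpow (hp : 1 < p) (hq : 1 ≤ q) :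
    Integrable (fun z : ℝ × ℝ => (1 - z.1 ^ q * sinpq p q z.2 ^ q) ^ (-(1 / p)))
      ((volume.restrict (Ioo 0 1)).prod (volume.restrict (Ioc 0 (pipq p q / 2)))) := by
  have hsin : AEMeasurable (sinpq p q) (volume.restrict (Ioc 0 (pipq p q / 2))) :=
    aemeasurable_restrict_of_monotoneOn measurableSet_Ioc
      ((sinpq_monotoneOn hp hq).mono Ioc_subset_Icc_self)
  have hmeas : AEMeasurable (fun z : ℝ × ℝ => sinpq p q z.2)
      ((volume.restrict (Ioo 0 1)).prod (volume.restrict (Ioc 0 (pipq p q / 2)))) :=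
    hsin.comp_snd
  have hdom : Integrable (fun k : ℝ => (1 - k ^ q) ^ (-(1 / p))) (volume.restrict (Ioo 0 1)) := by
    rw [← IntegrableOn, ← integrableOn_Ioc_iff_integrableOn_Ioo,
      ← intervalIntegrable_iff_integrableOn_Ioc_of_le zero_le_one]
    exact intervalIntegrable_one_sub_rpow_rpow_zero_one hp hq
  refine (hdom.comp_fst _).mono'
    (((measurable_fst.aemeasurable.pow_const q).mul (hmeas.pow_const q)).const_sub 1
      |>.pow_const _).aestronglyMeasurable ?_
  rw [Measure.prod_restrict]
  filter_upwards [ae_restrict_mem (measurableSet_Ioo.prod measurableSet_Ioc)] with z hz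
  exact norm_one_sub_mul_rpow_rpow_le (by linarith) (by linarith) hz.1
    (sinpq_mem_Icc hp hq (Ioc_subset_Icc_self hz.2))

theorem integral_integral_eq_integral_div_sinpq (hp : 1 < p) (hq : 1 ≤ q) :
    ∫ k in (0 : ℝ)..1, ∫ θ in (0 : ℝ)..(pipq p q / 2), (1 - k ^ q * sinpq p q θ ^ q) ^ (-(1 / p))
      = ∫ θ in (0 : ℝ)..(pipq p q / 2), θ / sinpq p q θ := by
  have hT : 0 ≤ pipq p q / 2 := by linarith [pipq_pos hp hq]
  simp only [intervalIntegral.integral_of_le zero_le_one, intervalIntegral.integral_of_le hT]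
  rw [integral_Ioc_eq_integral_Ioo,
    integral_integral_swap (integrable_one_sub_mul_sinpq_rpow_rpow hp hq)]
  refine setIntegral_congr_fun measurableSet_Ioc fun θ hθ => ?_
  rw [← integral_Ioc_eq_integral_Ioo, ← intervalIntegral.integral_of_le zero_le_one,
    integral_one_sub_mul_rpow_rpow p q (sinpq_pos hp hq hθ),
    arcsinpq_sinpq hp hq (Ioc_subset_Icc_self hθ)]

end

/-- `∫₀^{π_{2,p}/2} x/sin_{2,p}(x) dx = ∫₀¹ K_{2,p}(k) dk`, where
`K_{2,p}(k) = ∫₀^{π_{2,p}/2} (1-k^p sin_{2,p}(θ)^p)^{-1/2} dθ`. -/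
theorem integral_eq_complete_elliptic (p : ℝ) (hp : 1 < p) :
    (∫ x in (0:ℝ)..(pipq 2 p / 2), x / sinpq 2 p x)
      = ∫ k in (0:ℝ)..1,
          ∫ θ in (0:ℝ)..(pipq 2 p / 2), (1 - k ^ p * sinpq 2 p θ ^ p) ^ (-(1/2) : ℝ) :=
  (integral_integral_eq_integral_div_sinpq one_lt_two hp.le).symm
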